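/- Let x and y be real numbers, each of which has a signed digit representation. Then the product x · y has a signed digit representation. -/

import Mathlib

/-- A real number has a signed digit representation if it is the sum of a
series of digits in {-1, 0, 1} weighted by powers of 1/2. -/
def HasSDR (x : ℝ) : Prop :=
  ∃ d : ℕ → ℤ, (∀ i, d i = -1 ∨ d i = 0 ∨ d i = 1) ∧
    x = ∑' i : ℕ, (d i : ℝ) / 2 ^ (i + 1)

/-!
The reals with a signed digit representation are exactly those of `[-1, 1]`. One inclusion is
`|∑ dᵢ 2⁻⁽ⁱ⁺¹⁾| ≤ ∑ 2⁻⁽ⁱ⁺¹⁾ = 1`. Conversely, if `(x + 1) / 2 = ∑ eᵢ 2⁻⁽ⁱ⁺¹⁾` is a binary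
expansion, then the digits `dᵢ = 2 eᵢ - 1 ∈ {-1, 1}` represent `x`. Since `[-1, 1]` is closed
under multiplication, so is the set of reals with a signed digit representation.
-/

lemma hasSum_one_div_two_pow_succ : HasSum (fun i : ℕ => (1 : ℝ) / 2 ^ (i + 1)) 1 := by
  convert hasSum_geometric_two' 1 using 1
  ext i
  rw [pow_succ']
  ring

lemma HasSDR.abs_le_one {x : ℝ} (hx : HasSDR x) : |x| ≤ 1 := by
  obtain ⟨d, hd, rfl⟩ := hx
  rw [← Real.norm_eq_abs]
  refine tsum_of_norm_bounded hasSum_one_div_two_pow_succ fun i => ?_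
  rcases hd i with h | h | h <;> simp [h]

lemma hasSDR_of_abs_le_one {x : ℝ} (hx : |x| ≤ 1) : HasSDR x := by
  have hx' : (x + 1) / 2 ∈ Set.Icc (0 : ℝ) 1 := by
    rw [abs_le] at hx
    constructor <;> linarith
  obtain ⟨e, -, he⟩ := Real.ofDigits_SurjOn one_lt_two hx'
  refine ⟨fun i => 2 * (e i : ℕ) - 1, fun i => by dsimp only; have := (e i).isLt; omega, ?_⟩
  have hsum := (Real.summable_ofDigitsTerm (digits := e)).hasSum.mul_left 2
    |>.sub hasSum_one_div_two_pow_succ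
  rw [← Real.ofDigits, he] at hsum
  have hterm (i : ℕ) : ((2 * (e i : ℕ) - 1 : ℤ) : ℝ) / 2 ^ (i + 1)
      = 2 * Real.ofDigitsTerm e i - 1 / 2 ^ (i + 1) := by
    simp only [Real.ofDigitsTerm]
    push_cast
    ring
  rw [tsum_congr hterm, hsum.tsum_eq]
  ring

lemma hasSDR_iff_abs_le_one {x : ℝ} : HasSDR x ↔ |x| ≤ 1 :=
  ⟨HasSDR.abs_le_one, hasSDR_of_abs_le_one⟩

theorem sdr_mul (x y : ℝ) (hx : HasSDR x) (hy : HasSDR y) :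
    HasSDR (x * y) := by
  rw [hasSDR_iff_abs_le_one, abs_mul] at *
  exact mul_le_one₀ hx (abs_nonneg y) hy
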